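/- Let Q : [0, ∞) → ℝ be continuously differentiable, non-increasing, bounded below by μ₁ > 0, with dQ/dt = -2νQ(Λ(t) - Q(t)) where ν > 0, Λ continuous, Λ(t) ≥ Q(t). If additionally dQ/dt converges as t → ∞ (e.g., is uniformly continuous), then lim_{t→∞} (Λ(t) - Q(t)) = 0; in particular lim_{t→∞} Λ(t) = lim_{t→∞} Q(t). -/

import Mathlib

/-!
Since `Q` is non-increasing and bounded below by `μ₁ > 0`, it converges to some `q ≥ μ₁ > 0`.
A convergent function whose derivative converges must have derivative tending to `0`: by the
mean value theorem `Q (t + 1) - Q t` is a value of `Q'` at a point beyond `t`. Hence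
`Λ - Q = Q' / (-2 ν Q) → 0 / (-2 ν q) = 0`, and `Λ = (Λ - Q) + Q → q`.
-/

open Filter Topology Set

theorem AntitoneOn.exists_tendsto_atTop_of_le {α β : Type*} [LinearOrder α]
    [ConditionallyCompleteLinearOrder β] [TopologicalSpace β] [OrderTopology β]
    {f : α → β} {a : α} {m : β} (hf : AntitoneOn f (Ici a)) (hm : ∀ t, a ≤ t → m ≤ f t) :
    ∃ q, m ≤ q ∧ Tendsto f atTop (𝓝 q) := by
  have : Nonempty α := ⟨a⟩
  have hanti : Antitone fun t => f (max t a) := fun s t hst =>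
    hf (le_max_right s a) (le_max_right t a) (max_le_max hst le_rfl)
  refine ⟨⨅ t, f (max t a), le_ciInf fun t => hm _ (le_max_right t a), ?_⟩
  refine (tendsto_atTop_ciInf hanti ⟨m, ?_⟩).congr' ?_
  · rintro _ ⟨t, rfl⟩
    exact hm _ (le_max_right t a)
  · filter_upwards [eventually_ge_atTop a] with t ht
    rw [max_eq_left ht]

theorem eq_zero_of_tendsto_of_tendsto_hasDerivAt {f f' : ℝ → ℝ} {a L : ℝ}
    (hf : Tendsto f atTop (𝓝 a)) (hderiv : ∀ᶠ t in atTop, HasDerivAt f (f' t) t)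
    (hf' : Tendsto f' atTop (𝓝 L)) : L = 0 := by
  obtain ⟨T, hT⟩ := eventually_atTop.1 hderiv
  have hmvt : ∀ t, ∃ ξ, T ≤ t → t ≤ ξ ∧ f' ξ = f (t + 1) - f t := by
    intro t
    by_cases ht : T ≤ t
    · obtain ⟨ξ, hξ, hslope⟩ := exists_hasDerivAt_eq_slope f f' (lt_add_one t)
        (fun x hx => (hT x (ht.trans hx.1)).continuousAt.continuousWithinAt)
        (fun x hx => hT x (ht.trans hx.1.le))
      exact ⟨ξ, fun _ => ⟨hξ.1.le, by simpa using hslope⟩⟩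
    · exact ⟨t, fun h => absurd h ht⟩
  choose ξ hξ using hmvt
  have hξ_atTop : Tendsto ξ atTop atTop :=
    tendsto_atTop_mono' atTop (eventually_atTop.2 ⟨T, fun t ht => (hξ t ht).1⟩) tendsto_id
  have hincrement : Tendsto (fun t => f (t + 1) - f t) atTop (𝓝 0) := by
    simpa using (hf.comp (tendsto_atTop_add_const_right _ 1 tendsto_id)).sub hf
  refine tendsto_nhds_unique ((hf'.comp hξ_atTop).congr' ?_) hincrement
  filter_upwards [eventually_ge_atTop T] with t ht using (hξ t ht).2

theorem dissipation_quotient_same_limit_general (ν μ₁ : ℝ) (hν : 0 < ν) (hμ : 0 < μ₁)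
    (Q Λ : ℝ → ℝ)
    (hmono : ∀ s t : ℝ, 0 ≤ s → s ≤ t → Q t ≤ Q s)
    (hQlb : ∀ t : ℝ, 0 ≤ t → μ₁ ≤ Q t)
    (hQd : ∀ t : ℝ, 0 ≤ t → HasDerivAt Q (-2 * ν * Q t * (Λ t - Q t)) t)
    (hconv : ∃ L : ℝ, Filter.Tendsto (fun t => -2 * ν * Q t * (Λ t - Q t))
      Filter.atTop (nhds L)) :
    Filter.Tendsto (fun t => Λ t - Q t) Filter.atTop (nhds 0) ∧
    ∃ q : ℝ, Filter.Tendsto Q Filter.atTop (nhds q) ∧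
      Filter.Tendsto Λ Filter.atTop (nhds q) := by
  obtain ⟨L, hL⟩ := hconv
  obtain ⟨q, hμq, hQq⟩ :=
    AntitoneOn.exists_tendsto_atTop_of_le (fun s hs t _ hst => hmono s t hs hst) hQlb
  have hL0 : L = 0 := eq_zero_of_tendsto_of_tendsto_hasDerivAt hQq (eventually_atTop.2 ⟨0, hQd⟩) hL
  have hq : -2 * ν * q ≠ 0 := by nlinarith [mul_pos hν (hμ.trans_le hμq)]
  have hgap : Tendsto (fun t => Λ t - Q t) atTop (𝓝 0) := by
    have hquot := hL.div (tendsto_const_nhds.mul hQq) hq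
    rw [hL0, zero_div] at hquot
    refine hquot.congr' ?_
    filter_upwards [eventually_ge_atTop 0] with t ht
    have hQt : Q t ≠ 0 := (hμ.trans_le (hQlb t ht)).ne'
    simp only [Pi.div_apply]
    field_simp
  exact ⟨hgap, q, hQq, by simpa using hgap.add hQq⟩

/-- if moreover `Q'` converges as `t → ∞`, then `Λ(t) - Q(t) → 0`, so `Λ` has the
same limit as `Q`. -/
theorem dissipation_quotient_same_limit (ν μ₁ : ℝ) (hν : 0 < ν) (hμ : 0 < μ₁)
    (Q Λ : ℝ → ℝ) (hQc : Continuous Q) (hΛc : Continuous Λ)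
    (hmono : ∀ s t : ℝ, 0 ≤ s → s ≤ t → Q t ≤ Q s)
    (hQlb : ∀ t : ℝ, 0 ≤ t → μ₁ ≤ Q t)
    (hQd : ∀ t : ℝ, 0 ≤ t → HasDerivAt Q (-2 * ν * Q t * (Λ t - Q t)) t)
    (hΛQ : ∀ t : ℝ, 0 ≤ t → Q t ≤ Λ t)
    (hconv : ∃ L : ℝ, Filter.Tendsto (fun t => -2 * ν * Q t * (Λ t - Q t))
      Filter.atTop (nhds L)) :
    Filter.Tendsto (fun t => Λ t - Q t) Filter.atTop (nhds 0) ∧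
    ∃ q : ℝ, Filter.Tendsto Q Filter.atTop (nhds q) ∧
      Filter.Tendsto Λ Filter.atTop (nhds q) :=
  dissipation_quotient_same_limit_general ν μ₁ hν hμ Q Λ hmono hQlb hQd hconv
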